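/- arXiv:1505.05745 — 4 statements merged into one kernel-verified Lean document; each statement's English description precedes it below -/
import Mathlib

section
/- For every m ≥ 1 and every real t ≥ 2, (-1)^m M_m(-t) > 0, where M_m is the m-th necklace polynomial. -/
/-!
After reindexing `d ↦ m / d`, `m · M_m(x) = ∑_{d ∣ m} μ(m/d) x^d`. At `x = -t` the term `d = m`
contributes `(-1)^m t^m` while the others have exponents `d < m` and coefficients of absolute value
at most `1`; since `t ≥ 2`, their sum is bounded by `∑_{k<m} t^k < t^m`, so the top term decides the sign.
-/

open Polynomial

/-- The m-th necklace polynomial `M_m(X) = (1/m) ∑_{d ∣ m} μ(d) X^(m/d)` over `ℚ`. -/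
noncomputable def necklace (m : ℕ) : Polynomial ℚ :=
  Polynomial.C ((m : ℚ)⁻¹) *
    ∑ d ∈ m.divisors, Polynomial.C ((ArithmeticFunction.moebius d : ℤ) : ℚ) * X ^ (m / d)

open Finset ArithmeticFunction
open scoped ArithmeticFunction.Moebius

lemma geom_sum_lt_pow_of_two_le {t : ℝ} (ht : 2 ≤ t) (n : ℕ) : ∑ i ∈ range n, t ^ i < t ^ n := by
  induction n with
  | zero => simp
  | succ n ih =>
    rw [sum_range_succ, pow_succ]
    nlinarith [pow_pos (by linarith : (0 : ℝ) < t) n]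

lemma abs_sum_mul_pow_lt_pow {x : ℝ} (hx : 2 ≤ |x|) {s : Finset ℕ} {n : ℕ} (hs : ∀ i ∈ s, i < n)
    (c : ℕ → ℝ) (hc : ∀ i ∈ s, |c i| ≤ 1) : |∑ i ∈ s, c i * x ^ i| < |x| ^ n :=
  calc |∑ i ∈ s, c i * x ^ i|
      ≤ ∑ i ∈ s, |x| ^ i := by
        refine (abs_sum_le_sum_abs _ _).trans (sum_le_sum fun i hi => ?_)
        rw [abs_mul, abs_pow]
        exact mul_le_of_le_one_left (by positivity) (hc i hi)
    _ ≤ ∑ i ∈ range n, |x| ^ i :=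
        sum_le_sum_of_subset_of_nonneg (fun i hi => mem_range.2 (hs i hi)) fun i _ _ => by positivity
    _ < |x| ^ n := geom_sum_lt_pow_of_two_le hx n

lemma aeval_necklace {K : Type*} [Field K] [CharZero K] (m : ℕ) (x : K) :
    aeval x (necklace m) = (m : K)⁻¹ * ∑ d ∈ m.divisors, (μ (m / d) : K) * x ^ d := by
  simp only [necklace, map_mul, map_sum, aeval_C, map_pow, aeval_X, map_inv₀, map_natCast,
    map_intCast]
  rw [← Nat.sum_div_divisors]
  refine congrArg _ (sum_congr rfl fun d hd => ?_)
  obtain ⟨hdm, hm⟩ := Nat.mem_divisors.1 hd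
  rw [Nat.div_div_self hdm hm]

theorem necklace_alternating_pos (m : ℕ) (hm : 1 ≤ m) (t : ℝ) (ht : 2 ≤ t) :
    0 < (-1) ^ m * Polynomial.aeval (-t) (necklace m) := by
  set S := ∑ d ∈ m.properDivisors, (μ (m / d) : ℝ) * (-t) ^ d
  have hS : |S| < t ^ m := by
    have hx : |-t| = t := by rw [abs_neg, abs_of_nonneg (by linarith)]
    have h := abs_sum_mul_pow_lt_pow (x := -t) (s := m.properDivisors) (by rwa [hx])
      (fun d hd => (Nat.mem_properDivisors.1 hd).2) (fun d => (μ (m / d) : ℝ))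
      (fun d _ => mod_cast abs_moebius_le_one)
    rwa [hx] at h
  have hsplit : ∑ d ∈ m.divisors, (μ (m / d) : ℝ) * (-t) ^ d = S + (-t) ^ m := by
    rw [← Nat.cons_self_properDivisors (by omega), sum_cons, Nat.div_self (by omega),
      moebius_apply_one, Int.cast_one, one_mul, add_comm]
  have hsign : (-1) ^ m * (S + (-t) ^ m) = (-1) ^ m * S + t ^ m := by
    rw [mul_add, ← mul_pow, neg_one_mul, neg_neg]
  have hpos : 0 < (-1) ^ m * S + t ^ m := by
    have : |(-1 : ℝ) ^ m * S| = |S| := by simp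
    linarith [neg_abs_le ((-1 : ℝ) ^ m * S)]
  rw [aeval_necklace, hsplit, mul_left_comm, hsign]
  exact mul_pos (inv_pos.2 (by exact_mod_cast hm)) hpos
end

section
/- For n ≥ 2 and a partition λ of n, the cycle polynomial N_λ(X) is NOT divisible by (X-1)^2 if and only if λ is a rectangle [b^a] with ab = n, or a rectangle plus one box [d^c, 1] with cd = n − 1. -/
open Polynomial

/-- The polynomial binomial coefficient binom(P, k) = P(P-1)⋯(P-k+1)/k!. -/
noncomputable def polyBinom (P : Polynomial ℚ) (k : ℕ) : Polynomial ℚ :=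
  Polynomial.C ((k.factorial : ℚ)⁻¹) * ∏ i ∈ Finset.range k, (P - Polynomial.C (i : ℚ))

/-- The cycle polynomial N_lam(X) = ∏_{j=1}^n binom(M_j(X), m_j(lam)). -/
noncomputable def cyclePoly (n : ℕ) (lam : Nat.Partition n) : Polynomial ℚ :=
  ∏ j ∈ Finset.Icc 1 n, polyBinom (necklace j) (Multiset.count j lam.parts)

/-!
Each factor `binom(Mⱼ, mⱼ)` of `N_λ` vanishes at `1` to order at most one. Indeed `M₁ = X`,
and for `j ≥ 2` the point `1` is a simple root of `Mⱼ`: `Mⱼ(1) = (1/j) ∑_{d ∣ j} μ(d) = 0`,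
while `Mⱼ'(1) = (1/j) ∑_{d ∣ j} μ(d) (j/d) = φ(j)/j ≠ 0`. Hence the order of `N_λ` at `1` is
the number of distinct parts of `λ` once a single part `1` is removed, and it is at most one
exactly when what is left is a rectangle.
-/

theorem Polynomial.rootMultiplicity_prod {R ι : Type*} [CommRing R] [IsDomain R]
    (s : Finset ι) (f : ι → R[X]) (h : ∏ i ∈ s, f i ≠ 0) (a : R) :
    rootMultiplicity a (∏ i ∈ s, f i) = ∑ i ∈ s, rootMultiplicity a (f i) := by
  classical
  simp only [← count_roots, roots_prod f s h, Multiset.count_bind]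
  rfl

open ArithmeticFunction
open scoped ArithmeticFunction.Moebius Nat

theorem ArithmeticFunction.sum_divisors_moebius_eq_zero {j : ℕ} (hj : j ≠ 1) :
    ∑ d ∈ j.divisors, μ d = 0 := by
  rw [← coe_mul_zeta_apply, moebius_mul_coe_zeta, one_apply_ne hj]

theorem ArithmeticFunction.sum_divisors_moebius_mul_div (j : ℕ) :
    ∑ d ∈ j.divisors, (μ d : ℚ) * (j / d : ℕ) = φ j := by
  rcases j.eq_zero_or_pos with rfl | hj
  · simp
  have inversion := (sum_eq_iff_sum_mul_moebius_eq (f := fun m => (φ m : ℚ))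
    (g := fun m => (m : ℚ))).1 (fun m _ => by exact_mod_cast Nat.sum_totient m) j hj
  rwa [Nat.sum_divisorsAntidiagonal (fun a b => (μ a : ℚ) * (b : ℕ))] at inversion

theorem necklace_one : necklace 1 = X := by
  simp [necklace]

theorem eval_one_necklace {j : ℕ} (hj : j ≠ 1) : (necklace j).eval 1 = 0 := by
  have hμ : ∑ d ∈ j.divisors, (μ d : ℚ) = 0 := by
    exact_mod_cast sum_divisors_moebius_eq_zero hj
  simp [necklace, eval_finsetSum, hμ]

theorem eval_one_derivative_necklace (j : ℕ) :
    (derivative (necklace j)).eval 1 = φ j / j := by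
  simp only [necklace, derivative_C_mul, derivative_sum, derivative_X_pow, eval_mul, eval_C,
    eval_finsetSum, eval_pow, eval_X, one_pow, mul_one]
  rw [sum_divisors_moebius_mul_div, div_eq_inv_mul]

theorem eval_one_derivative_necklace_pos {j : ℕ} (hj : 0 < j) :
    0 < (derivative (necklace j)).eval 1 := by
  rw [eval_one_derivative_necklace]
  have : 0 < φ j := Nat.totient_pos.2 hj
  positivity

theorem natDegree_necklace_pos {j : ℕ} (hj : 0 < j) : 0 < (necklace j).natDegree := by
  refine Nat.pos_of_ne_zero fun h => (eval_one_derivative_necklace_pos hj).ne' ?_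
  rw [derivative_of_natDegree_zero h, eval_zero]

theorem rootMultiplicity_one_necklace {j : ℕ} (hj : 2 ≤ j) :
    rootMultiplicity 1 (necklace j) = 1 := by
  have hne : necklace j ≠ 0 := ne_zero_of_natDegree_gt (natDegree_necklace_pos (by omega))
  have hpos : 0 < rootMultiplicity 1 (necklace j) :=
    (rootMultiplicity_pos hne).2 (eval_one_necklace (by omega))
  have hsimple : ¬ 1 < rootMultiplicity 1 (necklace j) := by
    rw [one_lt_rootMultiplicity_iff_isRoot hne]
    exact fun h => (eval_one_derivative_necklace_pos (by omega)).ne' h.2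
  omega

theorem polyBinom_ne_zero {P : ℚ[X]} (hP : 0 < P.natDegree) (k : ℕ) : polyBinom P k ≠ 0 := by
  refine mul_ne_zero (by simp [Nat.factorial_ne_zero]) (Finset.prod_ne_zero_iff.2 fun i _ => ?_)
  exact ne_zero_of_natDegree_gt (by rwa [natDegree_sub_C])

theorem rootMultiplicity_polyBinom {P : ℚ[X]} (hP : 0 < P.natDegree) {a : ℚ} {m : ℕ}
    (hm : rootMultiplicity a (P - C (m : ℚ)) = 1) (k : ℕ) :
    rootMultiplicity a (polyBinom P k) = if m < k then 1 else 0 := by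
  have hfac : ∀ i : ℕ, P - C (i : ℚ) ≠ 0 := fun i =>
    ne_zero_of_natDegree_gt (by rwa [natDegree_sub_C])
  have hPa : P.eval a = m := by
    have := (rootMultiplicity_pos (x := a) (hfac m)).1 (by omega)
    rwa [IsRoot, eval_sub, eval_C, sub_eq_zero] at this
  have hterm : ∀ i : ℕ, rootMultiplicity a (P - C (i : ℚ)) = if i = m then 1 else 0 := by
    intro i
    split_ifs with him
    · rwa [him]
    · refine rootMultiplicity_eq_zero fun h => him ?_
      rw [IsRoot, eval_sub, eval_C, hPa, sub_eq_zero] at h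
      exact_mod_cast h.symm
  have hprod := polyBinom_ne_zero hP k
  rw [polyBinom, rootMultiplicity_mul hprod, rootMultiplicity_C, zero_add,
    rootMultiplicity_prod _ _ (right_ne_zero_of_mul hprod),
    Finset.sum_congr rfl fun i _ => hterm i, Finset.sum_ite_eq']
  simp only [Finset.mem_range]

/-- `binom(M₁, k)` vanishes at `1` only through its factor `X - 1` (present iff `k ≥ 2`), and
`binom(Mⱼ, k)` for `j ≥ 2` only through `Mⱼ` (present iff `k ≥ 1`): removing one part `1`
accounts for the shift. -/
theorem rootMultiplicity_one_polyBinom_necklace_count {j : ℕ} (hj : 0 < j) (s : Multiset ℕ) :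
    rootMultiplicity 1 (polyBinom (necklace j) (s.count j)) = if j ∈ s.erase 1 then 1 else 0 := by
  rcases eq_or_ne j 1 with rfl | hj1
  · have hX : rootMultiplicity 1 (X - C ((1 : ℕ) : ℚ)) = 1 := by
      simpa using rootMultiplicity_X_sub_C_self (x := (1 : ℚ))
    have hmem : 1 ∈ s.erase 1 ↔ 1 < s.count 1 := by
      rw [← Multiset.count_pos, Multiset.count_erase_self]
      omega
    rw [necklace_one, rootMultiplicity_polyBinom (by simp) hX]
    simp only [hmem]
  · have hM : rootMultiplicity 1 (necklace j - C ((0 : ℕ) : ℚ)) = 1 := by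
      simpa using rootMultiplicity_one_necklace (by omega)
    rw [rootMultiplicity_polyBinom (natDegree_necklace_pos hj) hM]
    simp only [Multiset.mem_erase_of_ne hj1, Multiset.count_pos]

theorem cyclePoly_ne_zero (n : ℕ) (lam : Nat.Partition n) : cyclePoly n lam ≠ 0 :=
  Finset.prod_ne_zero_iff.2 fun _ hj =>
    polyBinom_ne_zero (natDegree_necklace_pos (Finset.mem_Icc.1 hj).1) _

theorem rootMultiplicity_one_cyclePoly (n : ℕ) (lam : Nat.Partition n) :
    rootMultiplicity 1 (cyclePoly n lam) = (lam.parts.erase 1).toFinset.card := by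
  classical
  have hsub : (lam.parts.erase 1).toFinset ⊆ Finset.Icc 1 n := fun j hj => by
    have hj := Multiset.mem_of_mem_erase (Multiset.mem_toFinset.1 hj)
    exact Finset.mem_Icc.2 ⟨lam.parts_pos hj, lam.le_of_mem_parts hj⟩
  rw [cyclePoly, rootMultiplicity_prod _ _ (cyclePoly_ne_zero n lam),
    Finset.sum_congr rfl fun j hj =>
      rootMultiplicity_one_polyBinom_necklace_count (Finset.mem_Icc.1 hj).1 lam.parts]
  simp only [← Multiset.mem_toFinset, Finset.sum_boole, Finset.filter_mem_eq_inter,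
    Finset.inter_eq_right.2 hsub, Nat.cast_id]

theorem Multiset.card_toFinset_le_one_iff {α : Type*} [DecidableEq α] [Nonempty α]
    {s : Multiset α} :
    s.toFinset.card ≤ 1 ↔ ∃ c a, s = replicate c a := by
  simp only [Finset.card_le_one_iff_subset_singleton, Finset.subset_singleton_iff',
    Multiset.mem_toFinset]
  constructor
  · rintro ⟨a, ha⟩
    exact ⟨card s, a, eq_replicate_card.2 ha⟩
  · rintro ⟨c, a, rfl⟩
    exact ⟨a, fun b hb => eq_of_mem_replicate hb⟩

theorem exists_erase_one_eq_replicate_iff {s : Multiset ℕ} {n : ℕ} (hs : s.sum = n) :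
    (∃ c d, s.erase 1 = Multiset.replicate c d) ↔
      (∃ a b, a * b = n ∧ s = Multiset.replicate a b) ∨
      (∃ c d, c * d = n - 1 ∧ s = Multiset.replicate c d + {1}) := by
  subst hs
  constructor
  · rintro ⟨c, d, h⟩
    by_cases h1 : 1 ∈ s
    · have hs1 : s = Multiset.replicate c d + {1} := by
        rw [← Multiset.cons_erase h1, h, Multiset.add_comm, Multiset.singleton_add]
      refine Or.inr ⟨c, d, ?_, hs1⟩
      rw [hs1]
      simp
    · rw [Multiset.erase_of_notMem h1] at h
      exact Or.inl ⟨c, d, by simp [h], h⟩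
  · rintro (⟨a, b, -, rfl⟩ | ⟨c, d, -, rfl⟩)
    · rcases eq_or_ne b 1 with rfl | hb
      · refine ⟨a - 1, 1, ?_⟩
        cases a <;> simp [Multiset.replicate_succ]
      · exact ⟨a, b, Multiset.erase_of_notMem fun h =>
          hb (Multiset.eq_of_mem_replicate h).symm⟩
    · exact ⟨c, d, by
        rw [Multiset.erase_add_right_pos _ (Multiset.mem_singleton_self 1),
          Multiset.erase_singleton, add_zero]⟩

theorem sq_sub_one_not_dvd_cyclePoly_iff_general (n : ℕ) (lam : Nat.Partition n) :
    ¬ ((X - 1) ^ 2 ∣ cyclePoly n lam) ↔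
      (∃ a b : ℕ, a * b = n ∧ lam.parts = Multiset.replicate a b) ∨
      (∃ c d : ℕ, c * d = n - 1 ∧ lam.parts = Multiset.replicate c d + {1}) := by
  classical
  rw [← exists_erase_one_eq_replicate_iff lam.parts_sum, ← Multiset.card_toFinset_le_one_iff,
    ← rootMultiplicity_one_cyclePoly, ← C_1,
    ← le_rootMultiplicity_iff (cyclePoly_ne_zero n lam)]
  omega

theorem sq_sub_one_not_dvd_cyclePoly_iff (n : ℕ) (hn : 2 ≤ n) (lam : Nat.Partition n) :
    ¬ ((X - 1) ^ 2 ∣ cyclePoly n lam) ↔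
      (∃ a b : ℕ, a * b = n ∧ lam.parts = Multiset.replicate a b) ∨
      (∃ c d : ℕ, c * d = n - 1 ∧ lam.parts = Multiset.replicate c d + {1}) :=
  sq_sub_one_not_dvd_cyclePoly_iff_general n lam
end

section
/- For n ≥ 2 and a factorization n = ab with b > 1, the value of the rational function N_{[b^a]}(X)/(X^{n-1}(X-1)) at X = 1 equals (-1)^{a+1} φ(b)/n. -/
open Polynomial

/-! Writing `f = f(c) + (X - c) · (f /ₘ (X - c))` shows that the quotient by `X - c` takes the
value `f'(c)` at `c`. Since `M_b(1) = (∑_{d ∣ b} μ(d)) / b = 0`, the only factor of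
`binom(M_b, a)` vanishing at `1` is `M_b` itself, so the derivative there is
`M_b'(1) · ∏_{0 < i < a} (-i) / a! = (-1)^(a+1) M_b'(1) / a`. Finally
`b M_b'(1) = ∑_{d ∣ b} μ(d) b/d` is `φ(b)`, by Möbius inversion of Gauss's identity
`∑_{d ∣ b} φ(d) = b`. -/

namespace ArithmeticFunction

theorem sum_divisors_moebius_eq_zero_s9 {R : Type*} [Ring R] {m : ℕ} (hm : m ≠ 1) :
    ∑ d ∈ m.divisors, (moebius d : R) = 0 := by
  have h := congrArg (· m) (coe_moebius_mul_coe_zeta (R := R))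
  rw [coe_mul_zeta_apply, one_apply_ne hm] at h
  simpa only [intCoe_apply] using h

theorem sum_divisors_moebius_mul_div_eq_totient {R : Type*} [Ring R] (m : ℕ) :
    ∑ d ∈ m.divisors, (moebius d : R) * ((m / d : ℕ) : R) = m.totient := by
  rcases m.eq_zero_or_pos with rfl | hm
  · simp
  have gauss : ∀ k : ℕ, 0 < k → ∑ d ∈ k.divisors, (d.totient : R) = k := fun k _ => by
    exact_mod_cast congrArg (Nat.cast : ℕ → R) (Nat.sum_totient k)
  rw [← sum_eq_iff_sum_mul_moebius_eq.mp gauss m hm,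
    ← Nat.sum_divisorsAntidiagonal fun d e => (moebius d : R) * (e : R)]

end ArithmeticFunction

theorem Polynomial.eval_divByMonic_X_sub_C_self {R : Type*} [CommRing R] (f : R[X]) (a : R) :
    (f /ₘ (X - C a)).eval a = (derivative f).eval a := by
  simpa using congrArg (eval a) (divByMonic_add_X_sub_C_mul_derivative_divByMonic_eq_derivative f a)

theorem necklace_eval_one {m : ℕ} (hm : m ≠ 1) : (necklace m).eval 1 = 0 := by
  simp [necklace, eval_finsetSum, ArithmeticFunction.sum_divisors_moebius_eq_zero_s9 hm]

theorem necklace_derivative_eval_one (m : ℕ) :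
    (derivative (necklace m)).eval 1 = m.totient / m := by
  simp only [necklace, derivative_C_mul, derivative_sum, derivative_X_pow, eval_mul, eval_C,
    eval_finsetSum, eval_pow, eval_X, one_pow, mul_one,
    ArithmeticFunction.sum_divisors_moebius_mul_div_eq_totient]
  ring

theorem derivative_polyBinom_succ_eval_of_eval_eq_zero {P : ℚ[X]} {x : ℚ} (hP : P.eval x = 0)
    (j : ℕ) :
    (derivative (polyBinom P (j + 1))).eval x = (-1) ^ j / (j + 1) * (derivative P).eval x := by
  have prod_eval : (∏ i ∈ Finset.range j, (P - C ((i : ℚ) + 1))).eval x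
      = (-1) ^ j * j.factorial := by
    simp only [eval_prod, eval_sub, eval_C, hP, zero_sub, Finset.prod_neg, Finset.card_range]
    simp [← Finset.prod_range_add_one_eq_factorial]
  rw [polyBinom, Finset.prod_range_succ', derivative_C_mul, derivative_mul]
  simp only [eval_mul, eval_add, eval_C, hP, Nat.cast_zero, map_zero, sub_zero, mul_zero,
    zero_add, Nat.cast_succ, prod_eval, Nat.factorial_succ, Nat.cast_mul]
  field_simp

theorem eval_one_rect_quotient (n a b : ℕ) (hn : 2 ≤ n) (hab : a * b = n) (hb : 1 < b) :
    (polyBinom (necklace b) a /ₘ (X - 1)).eval 1 =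
      (-1) ^ (a + 1) * (Nat.totient b : ℚ) / n := by
  obtain ⟨j, rfl⟩ := Nat.exists_eq_add_one_of_ne_zero (show a ≠ 0 by rintro rfl; omega)
  rw [← C_1, eval_divByMonic_X_sub_C_self,
    derivative_polyBinom_succ_eval_of_eval_eq_zero (necklace_eval_one hb.ne'),
    necklace_derivative_eval_one, ← hab, Nat.cast_mul, Nat.cast_succ, div_mul_div_comm]
  congr 1
  ring
end

section
/- Let ψ be the character of the representation of S_n induced from the trivial character of the cyclic subgroup C_n generated by an n-cycle. Then for a partition λ of n, the sum of ψ over the conjugacy class C_λ equals n! φ(b)/n if λ = [b^a] with ab = n, and 0 otherwise. -/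
open scoped Classical

/-- `g` has cycle type `[b^a]`: `a` cycles all of length `b` (fixed points, the
case `b = 1`, are excluded from `Equiv.Perm.cycleType`, hence the filter). -/
def hasCycleType {n : ℕ} (g : Equiv.Perm (Fin n)) (a b : ℕ) : Prop :=
  g.cycleType = Multiset.filter (fun x => 2 ≤ x) (Multiset.replicate a b)

/-- The character of the representation of `S_n` induced from the trivial character
of the cyclic subgroup generated by `h`, via the Frobenius formula. -/
noncomputable def indTrivChar {n : ℕ} (h : Equiv.Perm (Fin n)) (g : Equiv.Perm (Fin n)) : ℚ :=
  (n : ℚ)⁻¹ * ∑ x : Equiv.Perm (Fin n),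
    if x⁻¹ * g * x ∈ Subgroup.zpowers h then (1 : ℚ) else 0

/-!
The subgroup `⟨h⟩` generated by an `n`-cycle acts freely on the `n` points, so every cycle of
an element `y ∈ ⟨h⟩` has length `orderOf y`, i.e. `y` has cycle type `[d^(n/d)]` with
`d = orderOf y`. Exchanging the two sums in the class sum of the Frobenius formula and
conjugating turns it into `(n! / n) · #(⟨h⟩ ∩ C_λ)`. For `λ = [b^a]` this counts the elements
of order `b` in the cyclic group `⟨h⟩`, which are `φ(b)` many; any other class misses `⟨h⟩`.
-/

open Finset

theorem Multiset.lcm_replicate_of_ne_zero {a : ℕ} (ha : a ≠ 0) (b : ℕ) :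
    (Multiset.replicate a b).lcm = b := by
  rw [← Multiset.lcm_dedup, Multiset.replicate, Multiset.coe_dedup, List.replicate_dedup ha]
  simp

theorem card_mem_zpowers_orderOf_eq_totient {G : Type*} [Group G] [Fintype G] (g : G) {d : ℕ}
    (hd : d ∣ orderOf g) :
    #{y | y ∈ Subgroup.zpowers g ∧ orderOf y = d} = d.totient := by
  rw [← IsCyclic.card_orderOf_eq_totient (α := Subgroup.zpowers g) (by rwa [Fintype.card_zpowers])]
  refine (card_bij (fun y _ => y.1) ?_ ?_ ?_).symm
  · intro y hy
    simpa [Subgroup.orderOf_coe] using hy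
  · intro y _ z _ hyz
    exact Subtype.ext hyz
  · intro y hy
    simp only [mem_filter, mem_univ, true_and] at hy
    exact ⟨⟨y, hy.1⟩, by simpa [Subgroup.orderOf_mk] using hy.2, rfl⟩

theorem sum_card_conj_eq_card_mul_card {G : Type*} [Group G] [Fintype G] (P Q : G → Prop)
    (hP : ∀ g x : G, P (x⁻¹ * g * x) ↔ P g) :
    ∑ g with P g, #{x | Q (x⁻¹ * g * x)} = Fintype.card G * #{y | Q y ∧ P y} := by
  have hconj : ∀ x : G, #{g | P g ∧ Q (x⁻¹ * g * x)} = #{y | Q y ∧ P y} := fun x =>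
    card_equiv (MulAut.conj x⁻¹).toEquiv fun g => by
      simp only [mem_filter, mem_univ, true_and, MulEquiv.toEquiv_eq_coe, EquivLike.coe_coe,
        MulAut.conj_apply, inv_inv]
      rw [hP, and_comm]
  calc ∑ g with P g, #{x | Q (x⁻¹ * g * x)}
      = ∑ x, #{g | P g ∧ Q (x⁻¹ * g * x)} := by
        simp only [← filter_filter, card_filter]
        exact sum_comm
    _ = Fintype.card G * #{y | Q y ∧ P y} := by
        rw [sum_congr rfl fun x _ => hconj x, sum_const, card_univ, smul_eq_mul]

namespace Equiv.Perm

variable {α : Type*} [Fintype α] [DecidableEq α] {σ : Perm α}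

theorem support_eq_univ_of_cycleType_eq_singleton (hσ : σ.cycleType = {Fintype.card α}) :
    σ.support = univ :=
  eq_univ_of_card _ (by rw [← sum_cycleType, hσ, Multiset.sum_singleton])

theorem IsCycle.eq_one_of_mem_zpowers_of_apply_eq_self (hσ : σ.IsCycle)
    (hsupp : σ.support = univ) {τ : Perm α} (hτ : τ ∈ Subgroup.zpowers σ) {x : α}
    (hx : τ x = x) : τ = 1 := by
  obtain ⟨k, rfl⟩ := mem_powers_iff_mem_zpowers.mpr hτ
  exact (hσ.pow_eq_one_iff' (mem_support.mp (hsupp ▸ mem_univ x))).mpr hx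

theorem orderOf_cycleOf_eq_of_free
    (hfree : ∀ τ ∈ Subgroup.zpowers σ, ∀ x, τ x = x → τ = 1) {x : α} (hx : σ x ≠ x) :
    orderOf (σ.cycleOf x) = orderOf σ := by
  have hc : (σ.cycleOf x).IsCycle := isCycle_cycleOf σ hx
  refine orderOf_eq_orderOf_iff.mpr fun k => ?_
  rw [hc.pow_eq_one_iff' (by rwa [cycleOf_apply_self]), cycleOf_pow_apply_self]
  exact ⟨hfree _ (Subgroup.npow_mem_zpowers σ k) x, fun h => by rw [h, one_apply]⟩

theorem eq_orderOf_of_mem_cycleType_of_free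
    (hfree : ∀ τ ∈ Subgroup.zpowers σ, ∀ x, τ x = x → τ = 1) {r : ℕ} (hr : r ∈ σ.cycleType) :
    r = orderOf σ := by
  obtain ⟨c, hc, rfl⟩ := Multiset.mem_map.mp (cycleType_def σ ▸ hr)
  have hcycle := (mem_cycleFactorsFinset_iff.mp hc).1
  obtain ⟨x, hx⟩ := hcycle.nonempty_support
  have hσx : σ x ≠ x := mem_support.mp (mem_cycleFactorsFinset_support_le hc hx)
  rw [Function.comp_apply, ← hcycle.orderOf, cycle_is_cycleOf hx hc,
    orderOf_cycleOf_eq_of_free hfree hσx]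

theorem cycleType_eq_of_free (hfree : ∀ τ ∈ Subgroup.zpowers σ, ∀ x, τ x = x → τ = 1) :
    σ.cycleType = (Multiset.replicate (Fintype.card α / orderOf σ) (orderOf σ)).filter (2 ≤ ·) := by
  rcases eq_or_ne σ 1 with rfl | hσ
  · rw [cycleType_one, orderOf_one, eq_comm, Multiset.filter_eq_nil]
    intro r hr
    rw [Multiset.eq_of_mem_replicate hr]
    decide
  have hsupp : σ.support = univ := eq_univ_of_forall fun x =>
    mem_support.mpr fun hx => hσ (hfree σ (Subgroup.mem_zpowers σ) x hx)
  obtain ⟨m, hrep⟩ : ∃ m, σ.cycleType = Multiset.replicate m (orderOf σ) :=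
    ⟨_, Multiset.eq_replicate_card.mpr fun r hr => eq_orderOf_of_mem_cycleType_of_free hfree hr⟩
  have hcard : m * orderOf σ = Fintype.card α := by
    rw [← card_univ, ← hsupp, ← sum_cycleType, hrep, Multiset.sum_replicate, smul_eq_mul]
  calc σ.cycleType = σ.cycleType.filter (2 ≤ ·) :=
        (Multiset.filter_eq_self.mpr fun _ => two_le_of_mem_cycleType).symm
    _ = _ := by rw [hrep, ← hcard, Nat.mul_div_cancel _ (orderOf_pos σ)]

end Equiv.Perm

section CycleType

variable {n a b : ℕ}

theorem hasCycleType_conj_iff (g x : Equiv.Perm (Fin n)) :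
    hasCycleType (x⁻¹ * g * x) a b ↔ hasCycleType g a b := by
  rw [hasCycleType, hasCycleType, ← inv_inv x, inv_inv x⁻¹, Equiv.Perm.cycleType_conj]

theorem orderOf_eq_of_hasCycleType {g : Equiv.Perm (Fin n)} (hg : hasCycleType g a b)
    (ha : a ≠ 0) (hb : b ≠ 0) : orderOf g = b := by
  rw [← Equiv.Perm.lcm_cycleType, hg]
  rcases le_or_gt 2 b with h2 | h2
  · rw [Multiset.filter_eq_self.mpr fun r hr => (Multiset.eq_of_mem_replicate hr).symm ▸ h2,
      Multiset.lcm_replicate_of_ne_zero ha]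
  · rw [Multiset.filter_eq_nil.mpr fun r hr => (Multiset.eq_of_mem_replicate hr).symm ▸ h2.not_ge,
      Multiset.lcm_zero]
    omega

theorem hasCycleType_of_mem_zpowers {h : Equiv.Perm (Fin n)} (hh : h.IsCycle)
    (hsupp : h.support = univ) {y : Equiv.Perm (Fin n)} (hy : y ∈ Subgroup.zpowers h) :
    hasCycleType y (n / orderOf y) (orderOf y) := by
  simpa only [hasCycleType, Fintype.card_fin] using Equiv.Perm.cycleType_eq_of_free fun τ hτ _ hx =>
    hh.eq_one_of_mem_zpowers_of_apply_eq_self hsupp (Subgroup.zpowers_le.mpr hy hτ) hx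

theorem hasCycleType_iff_orderOf_eq {y : Equiv.Perm (Fin n)}
    (hy : hasCycleType y (n / orderOf y) (orderOf y)) (hab : a * b = n) (ha : a ≠ 0)
    (hb : b ≠ 0) : hasCycleType y a b ↔ orderOf y = b :=
  ⟨fun hya => orderOf_eq_of_hasCycleType hya ha hb, fun hyb => by
    simpa only [hyb, ← hab, Nat.mul_div_cancel _ (Nat.pos_of_ne_zero hb)] using hy⟩

end CycleType

theorem indTrivChar_eq_inv_mul_card {n : ℕ} (h g : Equiv.Perm (Fin n)) :
    indTrivChar h g = (n : ℚ)⁻¹ * #{x | x⁻¹ * g * x ∈ Subgroup.zpowers h} := by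
  rw [indTrivChar, sum_boole]

theorem sum_indTrivChar_eq {n : ℕ} (h : Equiv.Perm (Fin n)) (P : Equiv.Perm (Fin n) → Prop)
    (hP : ∀ g x, P (x⁻¹ * g * x) ↔ P g) :
    ∑ g with P g, indTrivChar h g =
      (n : ℚ)⁻¹ * n.factorial * #{y | y ∈ Subgroup.zpowers h ∧ P y} := by
  have hcard := sum_card_conj_eq_card_mul_card P (· ∈ Subgroup.zpowers h) hP
  rw [Fintype.card_perm, Fintype.card_fin] at hcard
  simp only [indTrivChar_eq_inv_mul_card, ← mul_sum, ← Nat.cast_sum, hcard]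
  push_cast
  ring

theorem indTrivChar_class_sums_general (n : ℕ) (h : Equiv.Perm (Fin n))
    (hcyc : h.cycleType = {n}) :
    (∀ a b : ℕ, a * b = n →
      ∑ g ∈ Finset.univ.filter (fun g : Equiv.Perm (Fin n) => hasCycleType g a b),
        indTrivChar h g = (n.factorial : ℚ) * (Nat.totient b) / n) ∧
    (∀ g : Equiv.Perm (Fin n), (∀ a b : ℕ, a * b = n → ¬ hasCycleType g a b) →
      indTrivChar h g = 0) := by
  have hn : 2 ≤ n := Equiv.Perm.two_le_of_mem_cycleType (hcyc ▸ Multiset.mem_singleton_self n)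
  have hcycle : h.IsCycle := Equiv.Perm.card_cycleType_eq_one.mp (by rw [hcyc]; rfl)
  have hsupp : h.support = univ :=
    Equiv.Perm.support_eq_univ_of_cycleType_eq_singleton (by rwa [Fintype.card_fin])
  have horder : orderOf h = n := by rw [hcycle.orderOf, hsupp, card_univ, Fintype.card_fin]
  have hpow := fun y (hy : y ∈ Subgroup.zpowers h) => hasCycleType_of_mem_zpowers hcycle hsupp hy
  constructor
  · intro a b hab
    have ha : a ≠ 0 := by rintro rfl; omega
    have hb : b ≠ 0 := by rintro rfl; omega
    rw [sum_indTrivChar_eq h _ hasCycleType_conj_iff,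
      filter_congr fun y _ =>
        and_congr_right fun hy => hasCycleType_iff_orderOf_eq (hpow y hy) hab ha hb,
      card_mem_zpowers_orderOf_eq_totient h ((Dvd.intro_left a hab).trans (dvd_of_eq horder.symm))]
    field_simp
  · intro g hg
    rw [indTrivChar_eq_inv_mul_card, card_eq_zero.mpr, Nat.cast_zero, mul_zero]
    refine filter_eq_empty_iff.mpr fun x _ hx =>
      hg _ _ ?_ ((hasCycleType_conj_iff g x).mp (hpow _ hx))
    exact Nat.div_mul_cancel ((orderOf_dvd_of_mem_zpowers hx).trans (dvd_of_eq horder))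

theorem indTrivChar_class_sums (n : ℕ) (hn : 1 ≤ n) (h : Equiv.Perm (Fin n))
    (hcyc : h.cycleType = {n}) :
    (∀ a b : ℕ, a * b = n →
      ∑ g ∈ Finset.univ.filter (fun g : Equiv.Perm (Fin n) => hasCycleType g a b),
        indTrivChar h g = (n.factorial : ℚ) * (Nat.totient b) / n) ∧
    (∀ g : Equiv.Perm (Fin n), (∀ a b : ℕ, a * b = n → ¬ hasCycleType g a b) →
      indTrivChar h g = 0) :=
  indTrivChar_class_sums_general n h hcyc
end
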